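/- Let k be a field and L ⊆ ℤ⁵ the subgroup generated by (1,1,0,−1,0) and (0,1,1,1,−1) (the lattice of principal divisors of the twice-iterated blow-up of ℙ², whose fan has rays ρ₁=(1,0), ρ₂=(1,1), ρ₃=(0,1), ρ₄=(−1,1), ρ₅=(0,−1) and maximal cones with ray index sets C = {{1,2},{2,3},{3,4},{4,5},{5,1}}). Let m = x₂ y₅ x₅⁻¹ y₂⁻¹ ∈ T be the monomial label of the extra vertex of the hyperplane arrangement. Then for every pair σ₁, σ₂ ∈ C there exists k₀ ∈ ℕ such that (x^σ̂₁ y^σ̂₂)^{k₀} · m ∈ M_{Λ(L)}, where x^σ̂ = ∏_{i∉σ} xᵢ and y^σ̂ = ∏_{i∉σ} yᵢ for σ ⊆ {1,…,5}. -/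

import Mathlib

noncomputable section

open MvPolynomial

/-- The Laurent polynomial ring `T = k[x₁^{±1},…,x₅^{±1},y₁^{±1},…,y₅^{±1}]`. -/
abbrev LaurentT (k : Type*) [Field k] :=
  AddMonoidAlgebra k ((Fin 5 → ℤ) × (Fin 5 → ℤ))

/-- The polynomial ring `S = k[x₁,…,x₅,y₁,…,y₅]`; `Sum.inl i ↦ xᵢ₊₁`, `Sum.inr i ↦ yᵢ₊₁`. -/
abbrev PolyS (k : Type*) [Field k] := MvPolynomial (Fin 5 ⊕ Fin 5) k

/-- The natural inclusion `S → T`. -/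
def incl (k : Type*) [Field k] : PolyS k →+* LaurentT k :=
  MvPolynomial.eval₂Hom (algebraMap k (LaurentT k))
    (Sum.elim
      (fun i => AddMonoidAlgebra.single (Pi.single i 1, 0) (1 : k))
      (fun i => AddMonoidAlgebra.single (0, Pi.single i 1) (1 : k)))

/-- The lattice module `M_{Λ(L)} ⊆ T`. -/
def latticeModule (k : Type*) [Field k] (L : AddSubgroup (Fin 5 → ℤ)) :
    Submodule k (LaurentT k) :=
  Submodule.span k
    { t | ∃ (c d : Fin 5 → ℕ) (u : Fin 5 → ℤ), u ∈ L ∧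
        t = AddMonoidAlgebra.single
          ((fun i => (c i : ℤ)) + u, (fun i => (d i : ℤ)) - u) (1 : k) }

/-- `x^σ̂ = ∏_{i ∉ σ} xᵢ ∈ S`. -/
def xhat (k : Type*) [Field k] (σ : Finset (Fin 5)) : PolyS k :=
  ∏ i ∈ σᶜ, X (Sum.inl i)

/-- `y^σ̂ = ∏_{i ∉ σ} yᵢ ∈ S`. -/
def yhat (k : Type*) [Field k] (σ : Finset (Fin 5)) : PolyS k :=
  ∏ i ∈ σᶜ, X (Sum.inr i)

/-- The ray index sets (0-indexed) of the maximal cones of the fan of the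
twice-iterated blow-up of `ℙ²`. -/
def maxCones : Finset (Finset (Fin 5)) := {{0, 1}, {1, 2}, {2, 3}, {3, 4}, {4, 0}}

/-- The monomial label `m = x₂ y₅ x₅⁻¹ y₂⁻¹ ∈ T` of the extra vertex. -/
def extraVertexLabel (k : Type*) [Field k] : LaurentT k :=
  AddMonoidAlgebra.single
    (Pi.single (1 : Fin 5) (1 : ℤ) - Pi.single (4 : Fin 5) (1 : ℤ),
     Pi.single (4 : Fin 5) (1 : ℤ) - Pi.single (1 : Fin 5) (1 : ℤ)) (1 : k)

/-!
Write `v = e₂ - e₅`, so that `m = x^v y^(-v)` and `m · (x^σ̂₁ y^σ̂₂)^n` is the Laurent monomial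
with exponent `(n·1_{σ₁ᶜ} + v, n·1_{σ₂ᶜ} - v)`. It lies in `M_{Λ(L)}` once some `u ∈ L` has
`u ≤ v` on `σ₁`, `v ≤ u` on `σ₂`, and `n ≥ |uᵢ - vᵢ|` for all `i`: subtracting `(u, -u)` then
leaves a nonnegative exponent. The elements of `L` are the vectors `(⟨w, ρᵢ⟩)ᵢ` for `w ∈ ℤ²`, and
for each of the 25 pairs of maximal cones a suitable `w = (a, b)` with `|a|, |b| ≤ 2` exists.
-/

open AddMonoidAlgebra

section LatticeModule

variable {k : Type*} [Field k]

theorem single_mem_latticeModule {L : AddSubgroup (Fin 5 → ℤ)} {a b u : Fin 5 → ℤ}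
    (hu : u ∈ L) (ha : u ≤ a) (hb : -u ≤ b) :
    single (a, b) (1 : k) ∈ latticeModule k L := by
  refine Submodule.subset_span
    ⟨fun i => (a i - u i).toNat, fun i => (b i + u i).toNat, u, hu, ?_⟩
  congr 1
  ext i
  · have : u i ≤ a i := ha i
    simp only [Pi.add_apply, Int.ofNat_toNat]
    omega
  · have : -u i ≤ b i := hb i
    simp only [Pi.sub_apply, Int.ofNat_toNat]
    omega

theorem incl_X_inl (i : Fin 5) : incl k (X (Sum.inl i)) = single (Pi.single i 1, 0) 1 :=
  eval₂Hom_X' _ _ _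

theorem incl_X_inr (i : Fin 5) : incl k (X (Sum.inr i)) = single (0, Pi.single i 1) 1 :=
  eval₂Hom_X' _ _ _

theorem incl_xhat_mul_yhat (σ τ : Finset (Fin 5)) :
    incl k (xhat k σ * yhat k τ) =
      single (∑ i ∈ σᶜ, Pi.single i 1, ∑ i ∈ τᶜ, Pi.single i 1) 1 := by
  simp only [xhat, yhat, map_mul, map_prod, incl_X_inl, incl_X_inr, prod_single,
    single_mul_single, Finset.prod_const_one, mul_one]
  congr 1
  ext <;> simp [Prod.fst_sum, Prod.snd_sum]

theorem incl_xhat_mul_yhat_pow (σ τ : Finset (Fin 5)) (n : ℕ) :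
    incl k ((xhat k σ * yhat k τ) ^ n) =
      single (fun i => if i ∈ σ then 0 else (n : ℤ), fun i => if i ∈ τ then 0 else (n : ℤ)) 1 := by
  rw [map_pow, incl_xhat_mul_yhat, single_pow, one_pow]
  congr 1
  ext i
  · by_cases hi : i ∈ σ <;> simp [Finset.sum_apply, hi]
  · by_cases hi : i ∈ τ <;> simp [Finset.sum_apply, hi]

theorem exists_pow_mul_single_mem_latticeModule {L : AddSubgroup (Fin 5 → ℤ)}
    {σ τ : Finset (Fin 5)} {u v : Fin 5 → ℤ} (hu : u ∈ L)
    (hσ : ∀ i ∈ σ, u i ≤ v i) (hτ : ∀ i ∈ τ, v i ≤ u i) :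
    ∃ n : ℕ, incl k ((xhat k σ * yhat k τ) ^ n) * single (v, -v) 1 ∈ latticeModule k L := by
  set n := ∑ i, (u i - v i).natAbs
  have hn (i : Fin 5) : |u i - v i| ≤ n := by
    rw [Int.abs_eq_natAbs, Nat.cast_le]
    exact Finset.single_le_sum (f := fun i => (u i - v i).natAbs) (fun _ _ => Nat.zero_le _)
      (Finset.mem_univ i)
  refine ⟨n, ?_⟩
  rw [incl_xhat_mul_yhat_pow, single_mul_single, one_mul]
  refine single_mem_latticeModule hu (fun i => ?_) (fun i => ?_)
  · by_cases hi : i ∈ σ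
    · simpa [hi] using hσ i hi
    · simp only [Pi.add_apply, hi, if_false]
      linarith [le_abs_self (u i - v i), hn i]
  · by_cases hi : i ∈ τ
    · simpa [hi] using hτ i hi
    · simp only [Pi.add_apply, Pi.neg_apply, hi, if_false]
      linarith [neg_abs_le (u i - v i), hn i]

end LatticeModule

theorem extraVertexLabel_eq (k : Type*) [Field k] :
    extraVertexLabel k = single (![0, 1, 0, 0, -1], -![0, 1, 0, 0, -1]) 1 := by
  rw [extraVertexLabel]
  congr 1
  ext i <;> fin_cases i <;> rfl

theorem exists_separating_mem_closure :
    ∀ σ₁ ∈ maxCones, ∀ σ₂ ∈ maxCones, ∃ u ∈ AddSubgroup.closure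
        {(![1, 1, 0, -1, 0] : Fin 5 → ℤ), ![0, 1, 1, 1, -1]},
      (∀ i ∈ σ₁, u i ≤ ![0, 1, 0, 0, -1] i) ∧ (∀ i ∈ σ₂, ![0, 1, 0, 0, -1] i ≤ u i) := by
  intro σ₁ hσ₁ σ₂ hσ₂
  fin_cases hσ₁ <;> fin_cases hσ₂ <;>
    first
      | exact ⟨_, AddSubgroup.mem_closure_pair.2 ⟨0, 1, rfl⟩, by decide⟩
      | exact ⟨_, AddSubgroup.mem_closure_pair.2 ⟨-1, 2, rfl⟩, by decide⟩
      | exact ⟨_, AddSubgroup.mem_closure_pair.2 ⟨-2, 0, rfl⟩, by decide⟩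
      | exact ⟨_, AddSubgroup.mem_closure_pair.2 ⟨-2, -2, rfl⟩, by decide⟩
      | exact ⟨_, AddSubgroup.mem_closure_pair.2 ⟨0, -2, rfl⟩, by decide⟩
      | exact ⟨_, AddSubgroup.mem_closure_pair.2 ⟨1, 0, rfl⟩, by decide⟩
      | exact ⟨_, AddSubgroup.mem_closure_pair.2 ⟨0, 0, rfl⟩, by decide⟩
      | exact ⟨_, AddSubgroup.mem_closure_pair.2 ⟨1, 1, rfl⟩, by decide⟩

theorem extra_vertex_label_torsion (k : Type*) [Field k] :
    ∀ σ₁ ∈ maxCones, ∀ σ₂ ∈ maxCones, ∃ k₀ : ℕ,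
      incl k ((xhat k σ₁ * yhat k σ₂) ^ k₀) * extraVertexLabel k
        ∈ latticeModule k
            (AddSubgroup.closure {![1, 1, 0, -1, 0], ![0, 1, 1, 1, -1]}) := by
  intro σ₁ hσ₁ σ₂ hσ₂
  obtain ⟨u, hu, hσ₁u, hσ₂u⟩ := exists_separating_mem_closure σ₁ hσ₁ σ₂ hσ₂
  rw [extraVertexLabel_eq]
  exact exists_pow_mul_single_mem_latticeModule hu hσ₁u hσ₂u

end
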